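/- Let M be an n×n real symmetric positive definite matrix and let W = M⁻¹. Let α > 0, α_g ≥ 0, ν > 0, and let Ṁ, F be symmetric matrices with F = 2·sym(M·A) for some matrix A, where sym(X) = (X + Xᵀ)/2. Then the inequality Ṁ + 2·sym(M·A) + α_g·I ⪯ −2α·M holds if and only if the block matrix [[−Ẇ' + 2·sym(A·W') + 2α·W', W'], [W', −(ν/α_g)·I]] ⪯ 0, where W' = ν·W and Ẇ' = −ν·W·Ṁ·W (assuming α_g > 0). -/

import Mathlib

open Matrix

/-! Congruence by the invertible symmetric matrix `W = M⁻¹` and scaling by `ν > 0` preserve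
positive semidefiniteness, and they turn `-(Ṁ + 2 sym(M A) + α_g I + 2α M)` into
`ν (-W Ṁ W - 2 sym(A W) - 2α W) - (α_g / ν) W' W'` with `W' = ν W`. This is exactly the Schur
complement of the block `(ν / α_g) I` in the negated block matrix, which is positive definite
because `α_g > 0`. -/

namespace Matrix

variable {m n : Type*}

theorem posSemidef_smul_iff {c : ℝ} (hc : 0 < c) {A : Matrix n n ℝ} :
    (c • A).PosSemidef ↔ A.PosSemidef := by
  refine ⟨fun h => ?_, fun h => h.smul hc.le⟩
  simpa [smul_smul, inv_mul_cancel₀ hc.ne'] using h.smul (inv_nonneg.mpr hc.le)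

theorem posSemidef_conj_iff_of_isUnit [Fintype n] [DecidableEq n] {U : Matrix n n ℝ}
    (hU : IsUnit U) (hUsymm : Uᵀ = U) {A : Matrix n n ℝ} :
    (U * A * U).PosSemidef ↔ A.PosSemidef := by
  have h := hU.posSemidef_star_right_conjugate_iff (x := A)
  rwa [star_eq_conjTranspose, conjTranspose_eq_transpose_of_trivial, hUsymm] at h

theorem posSemidef_fromBlocks_smul_one_iff [Fintype m] [Fintype n] [DecidableEq n] {c : ℝ}
    (hc : 0 < c) (A : Matrix m m ℝ) (B : Matrix m n ℝ) :
    (fromBlocks A B Bᵀ (c • 1)).PosSemidef ↔ (A - c⁻¹ • (B * Bᵀ)).PosSemidef := by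
  have hD : (c • 1 : Matrix n n ℝ).PosDef := PosDef.one.smul hc
  let : Invertible c := invertibleOfNonzero hc.ne'
  let : Invertible (c • 1 : Matrix n n ℝ) := hD.isUnit.invertible
  rw [← conjTranspose_eq_transpose_of_trivial, PosDef.fromBlocks₂₂ _ _ hD,
    inv_smul _ _ (by simp), inv_one, invOf_eq_inv, Matrix.mul_smul, Matrix.mul_one,
    Matrix.smul_mul]

end Matrix

theorem smul_conj_contraction_eq {n : Type*} [Fintype n] [DecidableEq n]
    {M W Mdot A : Matrix n n ℝ}
    (hWM : W * M = 1) (hMW : M * W = 1) (hMsymm : Mᵀ = M) (hWsymm : Wᵀ = W)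
    (α αg : ℝ) {ν : ℝ} (hν : ν ≠ 0) :
    ν • (W * (-((2 * α) • M) - (Mdot + (M * A + (M * A)ᵀ) + αg • 1)) * W) =
      -(ν • (W * Mdot * W) + (ν • (A * W) + (ν • (A * W))ᵀ) + ((2 * α) * ν) • W) -
        (ν / αg)⁻¹ • (ν • W * ν • W) := by
  have hMA : W * (M * A) * W = A * W := by rw [← Matrix.mul_assoc, hWM, Matrix.one_mul]
  have hAM : W * (Aᵀ * M) * W = W * Aᵀ := by
    rw [Matrix.mul_assoc, Matrix.mul_assoc, hMW, Matrix.mul_one]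
  have hWMW : W * M * W = W := by rw [hWM, Matrix.one_mul]
  simp only [Matrix.mul_sub, Matrix.sub_mul, Matrix.mul_add, Matrix.add_mul, Matrix.mul_neg,
    Matrix.neg_mul, Matrix.mul_smul, Matrix.smul_mul, Matrix.mul_one, hMA, hAM, hWMW,
    transpose_smul, transpose_mul, hMsymm, hWsymm, smul_smul, inv_div]
  have hsc : αg / ν * (ν * ν) = ν * αg := by field_simp
  rw [hsc]
  module

theorem stmt_3_general {n : ℕ} (M W Mdot A : Matrix (Fin n) (Fin n) ℝ)
    (hM : M.PosDef) (hW : W = M⁻¹)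
    (α αg ν : ℝ) (hαg : 0 < αg) (hν : 0 < ν) :
    (-((2 * α) • M) - (Mdot + (M * A + (M * A)ᵀ) + αg • 1)).PosSemidef ↔
      (-(fromBlocks
          (ν • (W * Mdot * W) + (ν • (A * W) + (ν • (A * W))ᵀ) + ((2 * α) * ν) • W)
          (ν • W) (ν • W) (-((ν / αg) • 1)))).PosSemidef := by
  have hdet : IsUnit M.det := hM.isUnit.map detMonoidHom
  have hWM : W * M = 1 := hW ▸ nonsing_inv_mul M hdet
  have hMW : M * W = 1 := hW ▸ mul_nonsing_inv M hdet
  have hMsymm : Mᵀ = M := hM.isHermitian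
  have hWsymm : Wᵀ = W := by rw [hW, transpose_nonsing_inv, hMsymm]
  have hSchur := posSemidef_fromBlocks_smul_one_iff (div_pos hν hαg)
    (-(ν • (W * Mdot * W) + (ν • (A * W) + (ν • (A * W))ᵀ) + ((2 * α) * ν) • W)) (-(ν • W))
  have hBsymm : (-(ν • W))ᵀ = -(ν • W) := by rw [transpose_neg, transpose_smul, hWsymm]
  rw [hBsymm, neg_mul_neg] at hSchur
  rw [fromBlocks_neg, neg_neg, hSchur,
    ← smul_conj_contraction_eq hWM hMW hMsymm hWsymm α αg hν.ne', posSemidef_smul_iff hν,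
    posSemidef_conj_iff_of_isUnit (IsUnit.of_mul_eq_one M hWM) hWsymm]

theorem stmt_3 {n : ℕ} (M W Mdot A : Matrix (Fin n) (Fin n) ℝ)
    (hM : M.PosDef) (hW : W = M⁻¹) (hMdot : Mdot.IsHermitian)
    (α αg ν : ℝ) (hα : 0 < α) (hαg : 0 < αg) (hν : 0 < ν) :
    (-((2 * α) • M) - (Mdot + (M * A + (M * A)ᵀ) + αg • 1)).PosSemidef ↔
      (-(fromBlocks
          (ν • (W * Mdot * W) + (ν • (A * W) + (ν • (A * W))ᵀ) + ((2 * α) * ν) • W)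
          (ν • W) (ν • W) (-((ν / αg) • 1)))).PosSemidef :=
  stmt_3_general M W Mdot A hM hW α αg ν hαg hν
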